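/- arXiv:2507.07751 — 6 statements merged into one kernel-verified Lean document; each statement's English description precedes it below -/
import Mathlib

section
/- Let d ≥ 2, let γ : ℝ^{d−1} → ℝ be Lipschitz, and fix x' ∈ ℝ^{d−1}. Assume for every v' ∈ ℝ^{d−1} the one-sided directional derivative g(v') := lim_{t→0+} (γ(x' + t v') − γ(x'))/t exists and that v' ↦ g(v') is continuous. Then the Bouligand tangent cone of epi(γ) at the point (x', γ(x')) equals epi(g), i.e. T^B_{(x', γ(x'))}(epi(γ)) = {v ∈ ℝ^d : v_d ≥ g(v')}. -/
open Set Topology Filter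

noncomputable section

/-- The epigraph of `γ : ℝ^{d-1} → ℝ`, as a subset of `ℝ^d ≃ ℝ^{d-1} × ℝ`. -/
def epi {n : ℕ} (γ : EuclideanSpace ℝ (Fin n) → ℝ) : Set (EuclideanSpace ℝ (Fin n) × ℝ) :=
  {y | γ y.1 ≤ y.2}

/-- The Bouligand tangent cone of `A` at `a`: `0` together with all `v ≠ 0` such that there is a
sequence `(u m)` in `A` with `u m ≠ a`, `u m → a`, and `(u m - a)/‖u m - a‖ → v/‖v‖`. -/
def bouligand {E : Type*} [NormedAddCommGroup E] [NormedSpace ℝ E] (A : Set E) (a : E) :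
    Set E :=
  {0} ∪ {v | v ≠ 0 ∧ ∃ u : ℕ → E, (∀ m, u m ∈ A) ∧ (∀ m, u m ≠ a) ∧
    Tendsto u atTop (nhds a) ∧
    Tendsto (fun m => ‖u m - a‖⁻¹ • (u m - a)) atTop (nhds (‖v‖⁻¹ • v))}

/-!
A nonzero `v` is tangent to `A` at `a` iff `a + t • z ∈ A` along sequences `t → 0⁺`, `z → v`.
For the epigraph of `γ` at `(x', γ x')` and `t > 0`, this membership says that the difference
quotient `(γ (x' + t • z.1) - γ x') / t` is at most `z.2`. Since `γ` is Lipschitz, these quotients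
converge to `g v.1` as `z.1 → v.1`, which gives `⊆`. For `⊇`, take `z = (v.1, max v.2 q_t)` with
`q_t` the difference quotient along `v.1`.
-/

section

variable {E : Type*} [NormedAddCommGroup E] [NormedSpace ℝ E]

theorem NormedSpace.continuousAt_normalize {v : E} (hv : v ≠ 0) :
    ContinuousAt NormedSpace.normalize v :=
  (continuous_norm.continuousAt.inv₀ (norm_ne_zero_iff.mpr hv)).smul continuousAt_id

theorem zero_mem_bouligand (A : Set E) (a : E) : (0 : E) ∈ bouligand A a :=
  Or.inl rfl

theorem mem_bouligand_iff {A : Set E} {a v : E} (hv : v ≠ 0) :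
    v ∈ bouligand A a ↔ ∃ t : ℕ → ℝ, ∃ z : ℕ → E, Tendsto t atTop (𝓝[>] 0) ∧
      Tendsto z atTop (𝓝 v) ∧ ∀ᶠ m in atTop, a + t m • z m ∈ A := by
  constructor
  · rintro (hv0 | ⟨-, u, huA, hua, hu, hdir⟩)
    · exact absurd hv0 hv
    have hdist : ∀ m, 0 < ‖u m - a‖ := fun m => norm_pos_iff.mpr (sub_ne_zero.mpr (hua m))
    refine ⟨fun m => ‖u m - a‖ / ‖v‖, fun m => ‖v‖ • NormedSpace.normalize (u m - a),
      ?_, ?_, ?_⟩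
    · refine tendsto_nhdsWithin_iff.mpr ⟨?_, Eventually.of_forall fun m => ?_⟩
      · simpa using (hu.sub_const a).norm.div_const ‖v‖
      · exact div_pos (hdist m) (norm_pos_iff.mpr hv)
    · have hlim := hdir.const_smul ‖v‖
      rwa [smul_smul, mul_inv_cancel₀ (norm_ne_zero_iff.mpr hv), one_smul] at hlim
    · refine Eventually.of_forall fun m => ?_
      rw [smul_smul, div_mul_cancel₀ _ (norm_ne_zero_iff.mpr hv), NormedSpace.norm_smul_normalize,
        add_sub_cancel]
      exact huA m
  · rintro ⟨t, z, ht, hz, hA⟩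
    have htpos : ∀ᶠ m in atTop, 0 < t m := ht eventually_mem_nhdsWithin
    obtain ⟨N, hN⟩ := eventually_atTop.mp (hA.and (htpos.and (hz.eventually_ne hv)))
    have hdiff (m : ℕ) : a + t (m + N) • z (m + N) - a = t (m + N) • z (m + N) :=
      add_sub_cancel_left _ _
    refine Or.inr ⟨hv, fun m => a + t (m + N) • z (m + N), fun m => (hN _ (by omega)).1,
      fun m => ?_, ?_, ?_⟩
    · obtain ⟨-, htm, hzm⟩ := hN (m + N) (by omega)
      simpa [smul_eq_zero, hzm] using htm.ne'
    · have hsmul : Tendsto (fun m => t m • z m) atTop (𝓝 0) := by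
        simpa using (tendsto_nhds_of_tendsto_nhdsWithin ht).smul hz
      simpa using (tendsto_add_atTop_iff_nat N).mpr (hsmul.const_add a)
    · have hnorm (m : ℕ) : ‖t (m + N) • z (m + N)‖⁻¹ • (t (m + N) • z (m + N)) =
          NormedSpace.normalize (z (m + N)) :=
        NormedSpace.normalize_smul_of_pos (hN (m + N) (by omega)).2.1 _
      simp only [hdiff, hnorm]
      exact (NormedSpace.continuousAt_normalize hv).tendsto.comp
        ((tendsto_add_atTop_iff_nat N).mpr hz)

theorem LipschitzWith.tendsto_slope_of_tendsto_direction {γ : E → ℝ} {K : NNReal}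
    (hγ : LipschitzWith K γ) {x v : E} {L : ℝ}
    (hL : Tendsto (fun t : ℝ => (γ (x + t • v) - γ x) / t) (𝓝[>] 0) (𝓝 L))
    {α : Type*} {l : Filter α} {t : α → ℝ} {z : α → E}
    (ht : Tendsto t l (𝓝[>] 0)) (hz : Tendsto z l (𝓝 v)) :
    Tendsto (fun i => (γ (x + t i • z i) - γ x) / t i) l (𝓝 L) := by
  have hclose : ∀ᶠ i in l,
      dist ((γ (x + t i • v) - γ x) / t i) ((γ (x + t i • z i) - γ x) / t i) ≤
        K * ‖v - z i‖ := by
    filter_upwards [ht eventually_mem_nhdsWithin] with i (hi : 0 < t i)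
    rw [dist_eq_norm, ← sub_div, sub_sub_sub_cancel_right, norm_div, Real.norm_of_nonneg hi.le,
      div_le_iff₀ hi]
    calc ‖γ (x + t i • v) - γ (x + t i • z i)‖ ≤ K * ‖x + t i • v - (x + t i • z i)‖ :=
          hγ.norm_sub_le _ _
      _ = K * ‖v - z i‖ * t i := by
          rw [add_sub_add_left_eq_sub, ← smul_sub, norm_smul, Real.norm_of_nonneg hi.le]; ring
  have hbound : Tendsto (fun i => (K : ℝ) * ‖v - z i‖) l (𝓝 0) := by
    simpa using ((hz.const_sub v).norm.const_mul (K : ℝ))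
  exact (hL.comp ht).congr_dist (squeeze_zero' (Eventually.of_forall fun _ => dist_nonneg)
    hclose hbound)

theorem add_smul_mem_epigraph_iff {γ : E → ℝ} {x : E} {t : ℝ} (ht : 0 < t) (w : E × ℝ) :
    (x, γ x) + t • w ∈ {y : E × ℝ | γ y.1 ≤ y.2} ↔ (γ (x + t • w.1) - γ x) / t ≤ w.2 := by
  rw [div_le_iff₀ ht, mem_ofPred_eq, sub_le_iff_le_add', mul_comm]
  rfl

theorem bouligand_epigraph_eq {γ : E → ℝ} {K : NNReal} (hγ : LipschitzWith K γ) {x : E}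
    {g : E → ℝ}
    (hg : ∀ v, Tendsto (fun t : ℝ => (γ (x + t • v) - γ x) / t) (𝓝[>] 0) (𝓝 (g v))) :
    bouligand {y : E × ℝ | γ y.1 ≤ y.2} (x, γ x) = {v | g v.1 ≤ v.2} := by
  have hg0 : g 0 = 0 := tendsto_nhds_unique (hg 0) (by simp)
  ext v
  rcases eq_or_ne v 0 with rfl | hv
  · simp [zero_mem_bouligand, hg0]
  rw [mem_bouligand_iff hv]
  constructor
  · rintro ⟨t, z, ht, hz, hA⟩
    refine le_of_tendsto_of_tendsto
      (hγ.tendsto_slope_of_tendsto_direction (hg v.1) ht hz.fst_nhds) hz.snd_nhds ?_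
    filter_upwards [hA, ht eventually_mem_nhdsWithin] with m hm (htm : 0 < t m)
    exact (add_smul_mem_epigraph_iff htm _).mp hm
  · intro (hgv : g v.1 ≤ v.2)
    obtain ⟨t, ht⟩ := exists_seq_tendsto (𝓝[>] (0 : ℝ))
    refine ⟨t, fun m => (v.1, max v.2 ((γ (x + t m • v.1) - γ x) / t m)), ht, ?_, ?_⟩
    · have hlim := (tendsto_const_nhds (x := v.2)).max ((hg v.1).comp ht)
      rw [max_eq_left hgv] at hlim
      exact (tendsto_const_nhds (x := v.1)).prodMk_nhds hlim
    · filter_upwards [ht eventually_mem_nhdsWithin] with m (htm : 0 < t m)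
      exact (add_smul_mem_epigraph_iff htm _).mpr (le_max_right _ _)

end

theorem stmt_3_general (n : ℕ) (γ : EuclideanSpace ℝ (Fin n) → ℝ)
    (K : NNReal) (hγ : LipschitzWith K γ) (x' : EuclideanSpace ℝ (Fin n))
    (g : EuclideanSpace ℝ (Fin n) → ℝ)
    (hg : ∀ v' : EuclideanSpace ℝ (Fin n),
      Tendsto (fun t : ℝ => (γ (x' + t • v') - γ x') / t) (𝓝[>] 0) (𝓝 (g v'))) :
    bouligand (epi γ) (x', γ x') = {v : EuclideanSpace ℝ (Fin n) × ℝ | g v.1 ≤ v.2} :=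
  bouligand_epigraph_eq hγ hg

/-- for `γ : ℝ^{d-1} → ℝ` Lipschitz with continuous one-sided directional
derivative `g` at `x'`, the Bouligand tangent cone of `epi γ` at `(x', γ x')` is the epigraph
of `g`. -/
theorem stmt_3 (n : ℕ) (hn : 1 ≤ n) (γ : EuclideanSpace ℝ (Fin n) → ℝ)
    (K : NNReal) (hγ : LipschitzWith K γ) (x' : EuclideanSpace ℝ (Fin n))
    (g : EuclideanSpace ℝ (Fin n) → ℝ)
    (hg : ∀ v' : EuclideanSpace ℝ (Fin n),
      Tendsto (fun t : ℝ => (γ (x' + t • v') - γ x') / t) (𝓝[>] 0) (𝓝 (g v')))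
    (hgc : Continuous g) :
    bouligand (epi γ) (x', γ x') = {v : EuclideanSpace ℝ (Fin n) × ℝ | g v.1 ≤ v.2} :=
  stmt_3_general n γ K hγ x' g hg
end
end

section
/- Let Ω ⊆ ℝ^d be open with nonempty boundary and let x ∈ ∂Ω be an LCDD boundary point in standard position. Then the topological frontier of the Bouligand tangent cone T^B_x(closure(Ω)) has d-dimensional Lebesgue measure zero. -/
open Set Topology Filter MeasureTheory

noncomputable section

/-- The strict epigraph of `γ`. -/
def epiStrict {n : ℕ} (γ : EuclideanSpace ℝ (Fin n) → ℝ) : Set (EuclideanSpace ℝ (Fin n) × ℝ) :=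
  {y | γ y.1 < y.2}

/-- The open feasible direction cone of `Ω` at `x`. -/
def feasible {E : Type*} [AddCommGroup E] [Module ℝ E] (Ω : Set E) (x : E) : Set E :=
  {v | ∃ tv > (0 : ℝ), ∀ t ∈ Set.Ioo (0 : ℝ) tv, x + t • v ∈ Ω}

/-- at an LCDD boundary point `x` of an open set `Ω` in standard position, the
topological frontier of the Bouligand tangent cone of `closure Ω` at `x` has Lebesgue measure
zero. -/
theorem stmt_5 (n : ℕ) (hn : 1 ≤ n) (Ω : Set (EuclideanSpace ℝ (Fin n) × ℝ))
    (hΩ : IsOpen Ω) (hbd : (frontier Ω).Nonempty)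
    (x : EuclideanSpace ℝ (Fin n) × ℝ) (hx : x ∈ frontier Ω)
    (δ : ℝ) (hδ : 0 < δ) (K : NNReal) (γ : EuclideanSpace ℝ (Fin n) → ℝ)
    (hγ : LipschitzWith K γ)
    (hcl : closure Ω ∩ Metric.ball x δ = epi γ ∩ Metric.ball x δ)
    (hop : Ω ∩ Metric.ball x δ = epiStrict γ ∩ Metric.ball x δ)
    (g : EuclideanSpace ℝ (Fin n) → ℝ) (hgc : Continuous g)
    (hg : ∀ v' : EuclideanSpace ℝ (Fin n),
      Tendsto (fun t : ℝ => (γ (x.1 + t • v') - γ x.1) / t) (𝓝[>] 0) (𝓝 (g v'))) :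
    volume (frontier (bouligand (closure Ω) x)) = 0 := by
  have hxball : x ∈ Metric.ball x δ := Metric.mem_ball_self hδ
  have hxepi : γ x.1 ≤ x.2 := by
    have h : x ∈ closure Ω ∩ Metric.ball x δ := ⟨frontier_subset_closure hx, hxball⟩
    rw [hcl] at h; exact h.1
  have hx2 : γ x.1 = x.2 := by
    refine le_antisymm hxepi (not_lt.mp fun h => ?_)
    have h' : x ∈ epiStrict γ ∩ Metric.ball x δ := ⟨h, hxball⟩
    rw [← hop] at h'
    exact (hΩ.frontier_eq ▸ hx).2 h'.1
  have hg0 : g 0 = 0 := by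
    refine tendsto_nhds_unique (hg 0) ?_
    simp only [smul_zero, add_zero, sub_self, zero_div]
    exact tendsto_const_nhds
  -- positive homogeneity of g
  have hhom : ∀ c : ℝ, 0 < c → ∀ v' : EuclideanSpace ℝ (Fin n), g (c • v') = c * g v' := by
    intro c hc v'
    have hmap : Tendsto (fun t : ℝ => c * t) (𝓝[>] 0) (𝓝[>] 0) := by
      apply tendsto_nhdsWithin_of_tendsto_nhds_of_eventually_within
      · have h0 : Tendsto (fun t : ℝ => c * t) (𝓝 0) (𝓝 (c * 0)) :=
          (continuous_const.mul continuous_id).tendsto 0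
        simpa using h0.mono_left nhdsWithin_le_nhds
      · filter_upwards [self_mem_nhdsWithin] with t ht
        exact mul_pos hc ht
    have h2 := ((hg v').comp hmap).const_mul c
    refine tendsto_nhds_unique (hg (c • v')) (h2.congr' ?_)
    filter_upwards [self_mem_nhdsWithin] with t ht
    have htne : t ≠ 0 := ne_of_gt ht
    have hcne : c ≠ 0 := ne_of_gt hc
    simp only [Function.comp]
    rw [show t • (c • v') = (c * t) • v' by rw [smul_smul, mul_comm]]
    field_simp
  -- inclusion 1 : bouligand ⊆ epi g
  have hTsub : bouligand (closure Ω) x ⊆ epi g := by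
    rintro v (hv | ⟨hv0, u, humem, hune, hulim, hudir⟩)
    · rw [mem_singleton_iff] at hv
      subst hv
      show g (0 : (EuclideanSpace ℝ (Fin n) × ℝ)).1 ≤ (0 : (EuclideanSpace ℝ (Fin n) × ℝ)).2
      simp [hg0]
    set w := ‖v‖⁻¹ • v with hw
    set t : ℕ → ℝ := fun m => ‖u m - x‖ with ht
    set ws : ℕ → (EuclideanSpace ℝ (Fin n) × ℝ) := fun m => (t m)⁻¹ • (u m - x) with hws
    have htpos : ∀ m, 0 < t m := fun m => norm_pos_iff.mpr (sub_ne_zero.mpr (hune m))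
    have htlim : Tendsto t atTop (𝓝[>] 0) := by
      apply tendsto_nhdsWithin_of_tendsto_nhds_of_eventually_within
      · exact tendsto_iff_norm_sub_tendsto_zero.mp hulim
      · exact Eventually.of_forall htpos
    have hdecomp : ∀ m, u m - x = t m • ws m := fun m =>
      (smul_inv_smul₀ (htpos m).ne' _).symm
    have hwslim : Tendsto ws atTop (𝓝 w) := hudir
    have hball : ∀ᶠ m in atTop, u m ∈ Metric.ball x δ := hulim (Metric.ball_mem_nhds x hδ)
    have hepi : ∀ᶠ m in atTop, γ (u m).1 ≤ (u m).2 := by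
      filter_upwards [hball] with m hm
      have h : u m ∈ epi γ ∩ Metric.ball x δ := by rw [← hcl]; exact ⟨humem m, hm⟩
      exact h.1
    set L : ℕ → ℝ := fun m => (γ ((u m).1) - γ x.1) / t m with hL
    set A : ℕ → ℝ := fun m => (γ (x.1 + (t m) • w.1) - γ x.1) / t m with hA
    set R : ℕ → ℝ := fun m => ((u m).2 - x.2) / t m with hR
    have hu1 : ∀ m, (u m).1 = x.1 + t m • (ws m).1 := by
      intro m
      have := hdecomp m
      have h1 : (u m).1 - x.1 = t m • (ws m).1 := by
        rw [← Prod.fst_sub, this]; rfl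
      linear_combination (norm := module) h1
    have hu2 : ∀ m, (u m).2 = x.2 + t m * (ws m).2 := by
      intro m
      have := hdecomp m
      have h1 : (u m).2 - x.2 = t m * (ws m).2 := by
        rw [← Prod.snd_sub, this]; rfl
      linarith
    have hRws : ∀ m, R m = (ws m).2 := by
      intro m
      show ((u m).2 - x.2) / t m = (ws m).2
      rw [hu2 m, add_sub_cancel_left]
      exact mul_div_cancel_left₀ _ (htpos m).ne'
    have hRlim : Tendsto R atTop (𝓝 w.2) := by
      rw [funext hRws]
      exact (continuous_snd.tendsto w).comp hwslim
    have hAlim : Tendsto A atTop (𝓝 (g w.1)) := (hg w.1).comp htlim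
    have hdiff : Tendsto (fun m => L m - A m) atTop (𝓝 0) := by
      apply squeeze_zero_norm (a := fun m => (K : ℝ) * ‖(ws m).1 - w.1‖)
      · intro m
        have hLa : L m - A m = (γ ((u m).1) - γ (x.1 + t m • w.1)) / t m := by
          rw [hL, hA]; ring
        rw [hLa]
        rw [Real.norm_eq_abs, abs_div, abs_of_pos (htpos m)]
        rw [div_le_iff₀ (htpos m)]
        have := hγ.dist_le_mul ((u m).1) (x.1 + t m • w.1)
        rw [Real.dist_eq, dist_eq_norm] at this
        refine this.trans ?_
        have : (u m).1 - (x.1 + t m • w.1) = t m • ((ws m).1 - w.1) := by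
          rw [hu1 m, smul_sub]; abel
        rw [this, norm_smul, Real.norm_eq_abs, abs_of_pos (htpos m)]
        ring_nf
        exact le_refl _
      · have h1 : Tendsto (fun m => ‖(ws m).1 - w.1‖) atTop (𝓝 0) :=
          tendsto_iff_norm_sub_tendsto_zero.mp ((continuous_fst.tendsto w).comp hwslim)
        simpa using h1.const_mul (K : ℝ)
    have hLlim : Tendsto L atTop (𝓝 (g w.1)) := by
      have := hAlim.add hdiff
      simpa using this
    have hLE : L ≤ᶠ[atTop] R := by
      filter_upwards [hepi] with m hm
      exact (div_le_div_iff_of_pos_right (htpos m)).mpr (by linarith [hx2])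
    have hkey : g w.1 ≤ w.2 := le_of_tendsto_of_tendsto hLlim hRlim hLE
    have hvnorm : (0 : ℝ) < ‖v‖ := norm_pos_iff.mpr hv0
    show g v.1 ≤ v.2
    have hw1 : w.1 = ‖v‖⁻¹ • v.1 := rfl
    have hw2 : w.2 = ‖v‖⁻¹ * v.2 := rfl
    calc g v.1 = g (‖v‖ • (‖v‖⁻¹ • v.1)) := by rw [smul_inv_smul₀ hvnorm.ne']
      _ = ‖v‖ * g (‖v‖⁻¹ • v.1) := hhom _ hvnorm _
      _ ≤ ‖v‖ * (‖v‖⁻¹ * v.2) := by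
          rw [← hw1, ← hw2]
          exact mul_le_mul_of_nonneg_left hkey hvnorm.le
      _ = v.2 := by field_simp
  -- inclusion 2 : epiStrict g ⊆ bouligand
  have hSsub : epiStrict g ⊆ bouligand (closure Ω) x := by
    intro v hv
    have hvlt : g v.1 < v.2 := hv
    have hv0 : v ≠ 0 := by
      rintro rfl
      simp [hg0] at hvlt
    have hEv : ∀ᶠ s : ℝ in 𝓝[>] 0, x + s • v ∈ epi γ ∩ Metric.ball x δ := by
      have h1 : ∀ᶠ s : ℝ in 𝓝[>] 0, (γ (x.1 + s • v.1) - γ x.1) / s < v.2 :=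
        (hg v.1).eventually_lt_const hvlt
      have h2 : ∀ᶠ s : ℝ in 𝓝[>] 0, s * ‖v‖ < δ := by
        have hT : Tendsto (fun s : ℝ => s * ‖v‖) (𝓝[>] 0) (𝓝 0) := by
          have h0 : Tendsto (fun s : ℝ => s * ‖v‖) (𝓝 0) (𝓝 (0 * ‖v‖)) :=
            (continuous_id.mul continuous_const).tendsto 0
          simpa using h0.mono_left nhdsWithin_le_nhds
        exact hT.eventually_lt_const hδ
      filter_upwards [h1, h2, self_mem_nhdsWithin] with s h1 h2 hs
      refine ⟨?_, ?_⟩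
      · show γ (x + s • v).1 ≤ (x + s • v).2
        have hlt : γ (x.1 + s • v.1) - γ x.1 < s * v.2 := by
          rw [div_lt_iff₀ hs] at h1; linarith
        have : (x + s • v).1 = x.1 + s • v.1 := rfl
        rw [this]
        have h2' : (x + s • v).2 = x.2 + s * v.2 := rfl
        rw [h2']
        linarith [hx2]
      · show dist (x + s • v) x < δ
        rw [dist_eq_norm]
        have : x + s • v - x = s • v := add_sub_cancel_left x _
        rw [this, norm_smul, Real.norm_eq_abs, abs_of_pos hs]
        exact h2
    obtain ⟨ε, hε, hIoo⟩ := mem_nhdsGT_iff_exists_Ioo_subset.mp hEv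
    rw [mem_Ioi] at hε
    set ts : ℕ → ℝ := fun m => ε / (m + 2) with hts
    have htspos : ∀ m, 0 < ts m := fun m => div_pos hε (by positivity)
    have htsIoo : ∀ m, ts m ∈ Ioo (0 : ℝ) ε := by
      intro m
      refine ⟨htspos m, ?_⟩
      rw [hts]
      refine div_lt_self hε ?_
      have : (0:ℝ) ≤ m := Nat.cast_nonneg m
      linarith
    have htslim : Tendsto ts atTop (𝓝 0) := by
      have hden : Tendsto (fun m : ℕ => ((m : ℝ) + 2)) atTop atTop :=
        tendsto_atTop_add_const_right _ 2 tendsto_natCast_atTop_atTop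
      exact Tendsto.div_atTop tendsto_const_nhds hden
    set u : ℕ → (EuclideanSpace ℝ (Fin n) × ℝ) := fun m => x + ts m • v with hu
    right
    refine ⟨hv0, u, ?_, ?_, ?_, ?_⟩
    · intro m
      have h := hIoo (htsIoo m)
      rw [← hcl] at h
      exact h.1
    · intro m
      rw [hu]
      intro hcon
      have : ts m • v = 0 := by
        have := congrArg (fun p => p - x) hcon
        simpa using this
      rcases smul_eq_zero.mp this with h | h
      · exact (htspos m).ne' h
      · exact hv0 h
    · have : Tendsto (fun m => x + ts m • v) atTop (𝓝 (x + (0 : ℝ) • v)) :=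
        tendsto_const_nhds.add (htslim.smul_const v)
      simpa using this
    · have hcomp : ∀ m, ‖u m - x‖⁻¹ • (u m - x) = ‖v‖⁻¹ • v := by
        intro m
        have h1 : u m - x = ts m • v := by rw [hu]; exact add_sub_cancel_left x _
        rw [h1, norm_smul, Real.norm_eq_abs, abs_of_pos (htspos m), mul_inv, smul_smul]
        rw [mul_assoc, mul_comm (‖v‖)⁻¹ (ts m), ← mul_assoc, inv_mul_cancel₀ (htspos m).ne']
        rw [one_mul]
      rw [funext hcomp]
      exact tendsto_const_nhds
  -- conclusion
  have hclosed : IsClosed (epi g) := isClosed_le (hgc.comp continuous_fst) continuous_snd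
  have hopen : IsOpen (epiStrict g) := isOpen_lt (hgc.comp continuous_fst) continuous_snd
  have hfr : frontier (bouligand (closure Ω) x) ⊆
      {p : EuclideanSpace ℝ (Fin n) × ℝ | g p.1 = p.2} := by
    intro p hp
    obtain ⟨h1, h2⟩ := hp
    have hle : g p.1 ≤ p.2 := closure_minimal hTsub hclosed h1
    refine le_antisymm hle (not_lt.mp fun h => h2 ?_)
    exact interior_maximal hSsub hopen h
  refine measure_mono_null hfr ?_
  have hm : MeasurableSet {p : EuclideanSpace ℝ (Fin n) × ℝ | g p.1 = p.2} :=
    measurableSet_eq_fun (hgc.measurable.comp measurable_fst) measurable_snd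
  rw [Measure.volume_eq_prod, Measure.prod_apply hm]
  have : ∀ a : EuclideanSpace ℝ (Fin n),
      (Prod.mk a ⁻¹' {p : EuclideanSpace ℝ (Fin n) × ℝ | g p.1 = p.2}) = {g a} := by
    intro a
    ext y
    simp [eq_comm]
  simp only [this, Real.volume_singleton, lintegral_zero]
end
end

section
/- Let Ω ⊆ ℝ^d be open with nonempty boundary and let x ∈ ∂Ω be an LCDD boundary point in standard position. Then the inward sector equals the Bouligand tangent cone: I_x(closure(Ω)) = T^B_x(closure(Ω)). -/
open Set Topology Filter MeasureTheory

noncomputable section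

/-- The inward sector of `A` at `x`: all velocities `c'(0)` of `C¹` curves
`c : (-ε, ε) → E` with `c 0 = x` and `c t ∈ A` for `t ∈ [0, ε)`. -/
def inwardSector {E : Type*} [NormedAddCommGroup E] [NormedSpace ℝ E] (A : Set E) (x : E) :
    Set E :=
  {v | ∃ ε > (0 : ℝ), ∃ c : ℝ → E, ContDiffOn ℝ 1 c (Set.Ioo (-ε) ε) ∧ c 0 = x ∧
    (∀ t ∈ Set.Ico (0 : ℝ) ε, c t ∈ A) ∧ HasDerivWithinAt c v (Set.Ioo (-ε) ε) 0}

/-! A `C¹` curve leaving `x` with velocity `v ≠ 0` produces points whose normalized chords tend to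
`v / ‖v‖`, so inward directions are Bouligand tangents; this holds for any set.

Conversely, if `v` is a Bouligand tangent, the epigraph inequality along the approximating
sequence passes to the limit thanks to the Lipschitz bound on `γ`, giving `γ'(x'; v') ≤ v_d`.
Then `φ t = γ (x' + t v') - γ x' - t v_d` is `o(t)` from above, and the curve
`t ↦ x + t v + (0, η t)` stays in the epigraph as soon as `η ≥ φ` on `(0, ∞)` is `C¹` with
`η 0 = η' 0 = 0`. Such an `η` comes from the monotone envelope `ω s = sup_{0 < u ≤ s} φ u / u`
by averaging twice over dyadic intervals `[t, 2t]`: the first average is continuous, so the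
second is `C¹`. -/

section Cones

variable {E : Type*} [NormedAddCommGroup E] [NormedSpace ℝ E] {A : Set E} {a v : E}

theorem mem_bouligand_of_tendsto {s : ℕ → ℝ} {z : ℕ → E} (hv : v ≠ 0)
    (hs : Tendsto s atTop (𝓝[>] 0)) (hz : Tendsto z atTop (𝓝 v))
    (hA : ∀ᶠ m in atTop, a + s m • z m ∈ A) : v ∈ bouligand A a := by
  obtain ⟨N, hN⟩ := eventually_atTop.1
    ((hs.eventually self_mem_nhdsWithin).and ((hz.eventually_ne hv).and hA))
  have hshift : Tendsto (· + N) atTop atTop := tendsto_add_atTop_nat N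
  have hsub : ∀ m, a + s (m + N) • z (m + N) - a = s (m + N) • z (m + N) := fun m =>
    add_sub_cancel_left _ _
  refine Or.inr ⟨hv, fun m => a + s (m + N) • z (m + N), fun m => (hN _ (by omega)).2.2,
    fun m => ?_, ?_, ?_⟩
  · obtain ⟨hpos, hne, -⟩ := hN (m + N) (by omega)
    simpa using And.intro (ne_of_gt hpos) hne
  · have h := ((tendsto_nhds_of_tendsto_nhdsWithin hs).smul hz).const_add a
    rw [zero_smul, add_zero] at h
    exact h.comp hshift
  · have hunit : ∀ m, ‖s (m + N) • z (m + N)‖⁻¹ • (s (m + N) • z (m + N)) =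
        ‖z (m + N)‖⁻¹ • z (m + N) := fun m => by
      have hpos : 0 < s (m + N) := (hN (m + N) (by omega)).1
      rw [norm_smul, Real.norm_of_nonneg hpos.le, mul_inv, smul_smul]
      field_simp
    simp only [hsub, hunit]
    exact ((hz.norm.inv₀ (norm_ne_zero_iff.2 hv)).smul hz).comp hshift

theorem inwardSector_subset_bouligand : inwardSector A a ⊆ bouligand A a := by
  rintro v ⟨ε, hε, c, -, hc0, hcA, hcv⟩
  rcases eq_or_ne v 0 with rfl | hv
  · exact Or.inl rfl
  obtain ⟨t, ht⟩ := exists_seq_tendsto (𝓝[>] (0 : ℝ))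
  have hslope : Tendsto (fun s => s⁻¹ • (c s - a)) (𝓝[>] 0) (𝓝 v) := by
    simpa [hc0] using
      (hcv.hasDerivAt (Ioo_mem_nhds (neg_neg_iff_pos.2 hε) hε)).tendsto_slope_zero_right
  refine mem_bouligand_of_tendsto hv ht (hslope.comp ht) ?_
  filter_upwards [ht (Ioo_mem_nhdsGT hε)] with m hm
  simpa [smul_smul, hm.1.ne'] using hcA (t m) ⟨hm.1.le, hm.2⟩

theorem exists_seq_of_mem_bouligand (hv : v ∈ bouligand A a) (hv0 : v ≠ 0) :
    ∃ s : ℕ → ℝ, ∃ z : ℕ → E, Tendsto s atTop (𝓝[>] 0) ∧ Tendsto z atTop (𝓝 v) ∧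
      ∀ m, a + s m • z m ∈ A := by
  obtain ⟨-, u, huA, hua, hu, hdir⟩ := hv.resolve_left hv0
  have hvpos : 0 < ‖v‖ := norm_pos_iff.2 hv0
  have hdist : ∀ m, 0 < ‖u m - a‖ := fun m => norm_pos_iff.2 (sub_ne_zero.2 (hua m))
  refine ⟨fun m => ‖u m - a‖ / ‖v‖, fun m => ‖v‖ • (‖u m - a‖⁻¹ • (u m - a)), ?_, ?_, fun m => ?_⟩
  · refine tendsto_nhdsWithin_iff.2 ⟨?_, Eventually.of_forall fun m => div_pos (hdist m) hvpos⟩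
    simpa using ((hu.sub_const a).norm).div_const ‖v‖
  · simpa [smul_smul, mul_inv_cancel₀ hvpos.ne'] using hdir.const_smul ‖v‖
  · rw [smul_smul, smul_smul, div_mul_cancel₀ _ hvpos.ne', mul_inv_cancel₀ (hdist m).ne', one_smul,
      add_sub_cancel]
    exact huA m

end Cones

section Majorant

open intervalIntegral

/-- At `s = 0` this is `0 / 0 = 0`, the value that makes it continuous for the functions below. -/
def dyadicAverage (f : ℝ → ℝ) (s : ℝ) : ℝ := (∫ r in s..2 * s, f r) / s

variable {f : ℝ → ℝ} {s : ℝ}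

theorem Monotone.mul_le_integral_dyadic (hf : Monotone f) (hs : 0 ≤ s) :
    s * f s ≤ ∫ r in s..2 * s, f r := by
  calc s * f s = ∫ _ in s..2 * s, f s := by rw [intervalIntegral.integral_const, smul_eq_mul]; ring
    _ ≤ ∫ r in s..2 * s, f r :=
      integral_mono_on (by linarith) intervalIntegrable_const hf.intervalIntegrable
        fun r hr => hf hr.1

theorem Monotone.integral_dyadic_le (hf : Monotone f) (hs : 0 ≤ s) :
    ∫ r in s..2 * s, f r ≤ s * f (2 * s) := by
  calc ∫ r in s..2 * s, f r ≤ ∫ _ in s..2 * s, f (2 * s) :=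
      integral_mono_on (by linarith) hf.intervalIntegrable intervalIntegrable_const
        fun r hr => hf hr.2
    _ = s * f (2 * s) := by rw [intervalIntegral.integral_const, smul_eq_mul]; ring

theorem Monotone.le_dyadicAverage (hf : Monotone f) (hs : 0 < s) : f s ≤ dyadicAverage f s :=
  (le_div_iff₀ hs).2 (by linarith [hf.mul_le_integral_dyadic hs.le])

theorem Monotone.dyadicAverage_le (hf : Monotone f) (hs : 0 < s) :
    dyadicAverage f s ≤ f (2 * s) :=
  (div_le_iff₀ hs).2 (by linarith [hf.integral_dyadic_le hs.le])

theorem dyadicAverage_of_nonpos (hf : ∀ r ≤ 0, f r = 0) (hs : s ≤ 0) : dyadicAverage f s = 0 := by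
  have hzero : EqOn f 0 (uIcc s (2 * s)) := fun r hr => by
    rw [uIcc_of_ge (by linarith)] at hr
    exact hf r (hr.2.trans hs)
  rw [dyadicAverage, integral_congr hzero]
  simp

theorem Monotone.continuous_integral_dyadic (hf : Monotone f) :
    Continuous fun s => ∫ r in s..2 * s, f r := by
  have hG := continuous_primitive (fun a b => hf.intervalIntegrable (μ := volume)) 0
  refine ((hG.comp (continuous_const_mul 2)).sub hG).congr fun s => ?_
  exact integral_interval_sub_left hf.intervalIntegrable hf.intervalIntegrable

theorem Monotone.continuous_dyadicAverage (hf : Monotone f) (hf0 : ∀ r ≤ 0, f r = 0)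
    (hf0' : Tendsto f (𝓝[>] 0) (𝓝 0)) : Continuous (dyadicAverage f) := by
  refine continuous_iff_continuousAt.2 fun s => ?_
  rcases eq_or_ne s 0 with rfl | hs
  · rw [ContinuousAt, dyadicAverage_of_nonpos hf0 le_rfl]
    suffices h : Tendsto (dyadicAverage f) (𝓝[≤] 0 ⊔ 𝓝[>] 0) (𝓝 0) by
      rwa [nhdsLE_sup_nhdsGT] at h
    refine Tendsto.sup ?_ ?_
    · exact tendsto_const_nhds.congr' (eventually_nhdsWithin_of_forall fun r hr =>
        (dyadicAverage_of_nonpos hf0 hr).symm)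
    · have h2 : Tendsto (fun r : ℝ => 2 * r) (𝓝[>] 0) (𝓝[>] 0) :=
        tendsto_nhdsWithin_of_tendsto_nhds_of_eventually_within _
          (((continuous_const_mul (2 : ℝ)).tendsto' 0 0 (by simp)).mono_left nhdsWithin_le_nhds)
          (eventually_nhdsWithin_of_forall fun r (hr : 0 < r) => by simp [hr])
      exact tendsto_of_tendsto_of_tendsto_of_le_of_le' hf0' (hf0'.comp h2)
        (eventually_nhdsWithin_of_forall fun r hr => hf.le_dyadicAverage hr)
        (eventually_nhdsWithin_of_forall fun r hr => hf.dyadicAverage_le hr)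
  · exact hf.continuous_integral_dyadic.continuousAt.div continuousAt_id hs

variable {ψ : ℝ → ℝ}

theorem Continuous.hasDerivAt_integral_dyadic (hψ : Continuous ψ) (t : ℝ) :
    HasDerivAt (fun t => ∫ r in t..2 * t, ψ r) (2 * ψ (2 * t) - ψ t) t := by
  have hP := fun u => (hψ.integral_hasStrictDerivAt 0 u).hasDerivAt
  have h := ((hP (2 * t)).comp t ((hasDerivAt_id t).const_mul 2)).sub (hP t)
  refine (h.congr_of_eventuallyEq (Eventually.of_forall fun u => ?_)).congr_deriv (by simp; ring)
  exact (integral_interval_sub_left (hψ.intervalIntegrable _ _) (hψ.intervalIntegrable _ _)).symm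

theorem Continuous.contDiff_integral_dyadic (hψ : Continuous ψ) :
    ContDiff ℝ 1 fun t => ∫ r in t..2 * t, ψ r := by
  rw [contDiff_one_iff_deriv, funext fun t => (hψ.hasDerivAt_integral_dyadic t).deriv]
  exact ⟨fun t => (hψ.hasDerivAt_integral_dyadic t).differentiableAt, by fun_prop⟩

variable {φ : ℝ → ℝ} {L : ℝ}

theorem exists_monotone_majorant (hL : ∀ u > 0, φ u ≤ L * u)
    (hφ : ∀ ε > 0, ∀ᶠ u in 𝓝[>] 0, φ u ≤ ε * u) :
    ∃ ω : ℝ → ℝ, Monotone ω ∧ (∀ s ≤ 0, ω s = 0) ∧ Tendsto ω (𝓝[>] 0) (𝓝 0) ∧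
      ∀ u > 0, φ u ≤ u * ω u := by
  set S : ℝ → Set ℝ := fun s => insert 0 ((fun u => φ u / u) '' Ioc 0 s)
  have hbdd : ∀ s, BddAbove (S s) := fun s => by
    refine BddAbove.insert 0 ⟨L, ?_⟩
    rintro _ ⟨u, hu, rfl⟩
    exact (div_le_iff₀ hu.1).2 (hL u hu.1)
  have hnonneg : ∀ s, 0 ≤ sSup (S s) := fun s => le_csSup (hbdd s) (mem_insert 0 _)
  refine ⟨fun s => sSup (S s), fun s s' hss' => ?_, fun s hs => ?_, ?_, fun u hu => ?_⟩
  · exact csSup_le_csSup (hbdd s') (insert_nonempty _ _)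
      (insert_subset_insert (image_mono (Ioc_subset_Ioc_right hss')))
  · simp [S, Ioc_eq_empty (not_lt.2 hs)]
  · refine tendsto_order.2 ⟨fun a ha => Eventually.of_forall fun s => ha.trans_le (hnonneg s),
      fun a ha => ?_⟩
    obtain ⟨δ, hδ, hsub⟩ := mem_nhdsGT_iff_exists_Ioo_subset.1 (hφ (a / 2) (half_pos ha))
    filter_upwards [Ioo_mem_nhdsGT hδ] with s hs
    refine (csSup_le (insert_nonempty _ _) ?_).trans_lt (half_lt_self ha)
    rintro _ (rfl | ⟨u, hu, rfl⟩)
    · exact (half_pos ha).le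
    · exact (div_le_iff₀ hu.1).2 (hsub ⟨hu.1, hu.2.trans_lt hs.2⟩)
  · rw [mul_comm, ← div_le_iff₀ hu]
    exact le_csSup (hbdd u) (mem_insert_of_mem 0 ⟨u, ⟨hu, le_rfl⟩, rfl⟩)

theorem exists_contDiff_majorant (hL : ∀ u > 0, φ u ≤ L * u)
    (hφ : ∀ ε > 0, ∀ᶠ u in 𝓝[>] 0, φ u ≤ ε * u) :
    ∃ η : ℝ → ℝ, ContDiff ℝ 1 η ∧ η 0 = 0 ∧ HasDerivAt η 0 0 ∧ ∀ t > 0, φ t ≤ η t := by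
  obtain ⟨ω, hω, hω0, hωlim, hφω⟩ := exists_monotone_majorant hL hφ
  have hψ := hω.continuous_dyadicAverage hω0 hωlim
  have hψ0 : dyadicAverage ω 0 = 0 := dyadicAverage_of_nonpos hω0 le_rfl
  refine ⟨fun t => ∫ r in t..2 * t, dyadicAverage ω r, hψ.contDiff_integral_dyadic,
    by simp, by simpa [hψ0] using hψ.hasDerivAt_integral_dyadic 0, fun t ht => ?_⟩
  calc φ t ≤ t * ω t := hφω t ht
    _ ≤ ∫ r in t..2 * t, ω r := hω.mul_le_integral_dyadic ht.le
    _ ≤ ∫ r in t..2 * t, dyadicAverage ω r :=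
      integral_mono_on (by linarith) hω.intervalIntegrable
        (hψ.intervalIntegrable _ _) fun r hr => hω.le_dyadicAverage (ht.trans_le hr.1)

end Majorant

section Graph

variable {E : Type*} [NormedAddCommGroup E] [NormedSpace ℝ E] {K : NNReal} {γ : E → ℝ}

theorem LipschitzWith.dirDeriv_le_of_eventually_le {ι : Type*} {l : Filter ι} [l.NeBot]
    (hγ : LipschitzWith K γ) {p a : E} {b d : ℝ}
    (hd : Tendsto (fun t : ℝ => (γ (p + t • a) - γ p) / t) (𝓝[>] 0) (𝓝 d))
    {s : ι → ℝ} {a' : ι → E} {b' : ι → ℝ} (hs : Tendsto s l (𝓝[>] 0))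
    (ha : Tendsto a' l (𝓝 a)) (hb : Tendsto b' l (𝓝 b))
    (hle : ∀ᶠ i in l, γ (p + s i • a' i) ≤ γ p + s i * b' i) : d ≤ b := by
  have hbound : Tendsto (fun i => b' i + K * ‖a - a' i‖) l (𝓝 b) := by
    simpa using hb.add (((tendsto_const_nhds (x := a)).sub ha).norm.const_mul (K : ℝ))
  refine le_of_tendsto_of_tendsto (hd.comp hs) hbound ?_
  filter_upwards [hle, hs.eventually self_mem_nhdsWithin] with i hi hpos
  have hlip : γ (p + s i • a) ≤ γ (p + s i • a' i) + K * (s i * ‖a - a' i‖) := by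
    have h := hγ.dist_le_mul (p + s i • a) (p + s i • a' i)
    rw [Real.dist_eq, dist_eq_norm, add_sub_add_left_eq_sub, ← smul_sub, norm_smul,
      Real.norm_of_nonneg hpos.le] at h
    linarith [le_abs_self (γ (p + s i • a) - γ (p + s i • a' i))]
  rw [Function.comp_apply, div_le_iff₀ hpos]
  linarith

variable {x v : E × ℝ} {d : ℝ} {A : Set (E × ℝ)}

theorem dirDeriv_le_of_mem_bouligand (hγ : LipschitzWith K γ) (hx : γ x.1 = x.2)
    (hA : ∀ᶠ p in 𝓝 x, p ∈ A → γ p.1 ≤ p.2)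
    (hd : Tendsto (fun t : ℝ => (γ (x.1 + t • v.1) - γ x.1) / t) (𝓝[>] 0) (𝓝 d))
    (hv : v ∈ bouligand A x) : d ≤ v.2 := by
  rcases eq_or_ne v 0 with rfl | hv0
  · exact (tendsto_nhds_unique hd (by simp)).le
  obtain ⟨s, z, hs, hz, hzA⟩ := exists_seq_of_mem_bouligand hv hv0
  have hconv : Tendsto (fun m => x + s m • z m) atTop (𝓝 x) := by
    simpa using ((tendsto_nhds_of_tendsto_nhdsWithin hs).smul hz).const_add x
  refine hγ.dirDeriv_le_of_eventually_le hd hs (hz.fst_nhds) (hz.snd_nhds) ?_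
  filter_upwards [hconv.eventually hA] with m hm
  simpa [hx] using hm (hzA m)

theorem mem_inwardSector_of_dirDeriv_le (hγ : LipschitzWith K γ) (hx : γ x.1 = x.2)
    (hA : ∀ᶠ p in 𝓝 x, γ p.1 ≤ p.2 → p ∈ A)
    (hd : Tendsto (fun t : ℝ => (γ (x.1 + t • v.1) - γ x.1) / t) (𝓝[>] 0) (𝓝 d))
    (hdv : d ≤ v.2) : v ∈ inwardSector A x := by
  set φ : ℝ → ℝ := fun u => γ (x.1 + u • v.1) - γ x.1 - u * v.2
  have hφL : ∀ u > 0, φ u ≤ (K * ‖v.1‖ - v.2) * u := fun u hu => by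
    have h := hγ.dist_le_mul (x.1 + u • v.1) x.1
    rw [Real.dist_eq, dist_eq_norm, add_sub_cancel_left, norm_smul, Real.norm_of_nonneg hu.le] at h
    linarith [le_abs_self (γ (x.1 + u • v.1) - γ x.1)]
  have hφ : ∀ ε > 0, ∀ᶠ u in 𝓝[>] 0, φ u ≤ ε * u := fun ε hε => by
    have hlim : Tendsto (fun u => φ u / u) (𝓝[>] 0) (𝓝 (d - v.2)) :=
      (hd.sub_const v.2).congr' (eventually_nhdsWithin_of_forall fun u (hu : 0 < u) => by
        field_simp [φ]; ring)
    filter_upwards [hlim.eventually (eventually_lt_nhds (by linarith : d - v.2 < ε)),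
      self_mem_nhdsWithin] with u hu (hu0 : 0 < u)
    exact ((div_lt_iff₀ hu0).1 hu).le
  obtain ⟨η, hη, hη0, hη', hφη⟩ := exists_contDiff_majorant hφL hφ
  set c : ℝ → E × ℝ := fun t => x + t • v + ((0 : E), η t)
  have hc : ContDiff ℝ 1 c := by fun_prop
  have hc0 : c 0 = x := by simp [c, hη0]
  have hcv : HasDerivAt c v 0 := by
    have h := (((hasDerivAt_id (0 : ℝ)).smul_const v).const_add x).add
      ((hasDerivAt_const (0 : ℝ) (0 : E)).prodMk hη')
    rwa [one_smul, Prod.mk_zero_zero, add_zero] at h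
  have hcA : ∀ᶠ t in 𝓝 0, γ (c t).1 ≤ (c t).2 → c t ∈ A :=
    hc.continuous.continuousAt.tendsto.eventually (hc0 ▸ hA)
  obtain ⟨ε, hε, hεA⟩ := Metric.eventually_nhds_iff.1 hcA
  refine ⟨ε, hε, c, hc.contDiffOn, hc0, fun t ht => hεA ?_ ?_, hcv.hasDerivWithinAt⟩
  · simpa [abs_of_nonneg ht.1] using ht.2
  rcases ht.1.eq_or_lt with rfl | htpos
  · simp [hc0, hx]
  · have := hφη t htpos
    simp only [c, Prod.fst_add, Prod.snd_add, Prod.smul_fst, Prod.smul_snd, smul_eq_mul,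
      add_zero]
    linarith

end Graph

theorem stmt_7_general (n : ℕ) (Ω : Set (EuclideanSpace ℝ (Fin n) × ℝ))
    (hΩ : IsOpen Ω)
    (x : EuclideanSpace ℝ (Fin n) × ℝ) (hx : x ∈ frontier Ω)
    (δ : ℝ) (hδ : 0 < δ) (K : NNReal) (γ : EuclideanSpace ℝ (Fin n) → ℝ)
    (hγ : LipschitzWith K γ)
    (hcl : closure Ω ∩ Metric.ball x δ = epi γ ∩ Metric.ball x δ)
    (hop : Ω ∩ Metric.ball x δ = epiStrict γ ∩ Metric.ball x δ)
    (g : EuclideanSpace ℝ (Fin n) → ℝ)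
    (hg : ∀ v' : EuclideanSpace ℝ (Fin n),
      Tendsto (fun t : ℝ => (γ (x.1 + t • v') - γ x.1) / t) (𝓝[>] 0) (𝓝 (g v'))) :
    inwardSector (closure Ω) x = bouligand (closure Ω) x := by
  have hloc : ∀ᶠ p in 𝓝 x, p ∈ closure Ω ↔ γ p.1 ≤ p.2 := by
    filter_upwards [Metric.ball_mem_nhds x hδ] with p hp
    simpa [hp, epi] using Set.ext_iff.1 hcl p
  have hxγ : γ x.1 = x.2 := by
    refine le_antisymm (hloc.self_of_nhds.1 (frontier_subset_closure hx)) (not_lt.1 fun hlt => ?_)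
    have hxΩ : x ∈ Ω ∩ Metric.ball x δ := hop ▸ ⟨hlt, Metric.mem_ball_self hδ⟩
    exact (hΩ.frontier_eq ▸ hx).2 hxΩ.1
  exact inwardSector_subset_bouligand.antisymm fun v hv =>
    mem_inwardSector_of_dirDeriv_le hγ hxγ (hloc.mono fun p hp => hp.2) (hg v.1)
      (dirDeriv_le_of_mem_bouligand hγ hxγ (hloc.mono fun p hp => hp.1) (hg v.1) hv)

/-- at an LCDD boundary point `x` of an open set `Ω` in standard position, the
inward sector of `closure Ω` at `x` equals the Bouligand tangent cone of `closure Ω` at `x`. -/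
theorem stmt_7 (n : ℕ) (hn : 1 ≤ n) (Ω : Set (EuclideanSpace ℝ (Fin n) × ℝ))
    (hΩ : IsOpen Ω) (hbd : (frontier Ω).Nonempty)
    (x : EuclideanSpace ℝ (Fin n) × ℝ) (hx : x ∈ frontier Ω)
    (δ : ℝ) (hδ : 0 < δ) (K : NNReal) (γ : EuclideanSpace ℝ (Fin n) → ℝ)
    (hγ : LipschitzWith K γ)
    (hcl : closure Ω ∩ Metric.ball x δ = epi γ ∩ Metric.ball x δ)
    (hop : Ω ∩ Metric.ball x δ = epiStrict γ ∩ Metric.ball x δ)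
    (g : EuclideanSpace ℝ (Fin n) → ℝ) (hgc : Continuous g)
    (hg : ∀ v' : EuclideanSpace ℝ (Fin n),
      Tendsto (fun t : ℝ => (γ (x.1 + t • v') - γ x.1) / t) (𝓝[>] 0) (𝓝 (g v'))) :
    inwardSector (closure Ω) x = bouligand (closure Ω) x :=
  stmt_7_general n Ω hΩ x hx δ hδ K γ hγ hcl hop g hg
end
end

section
/- Let Ω ⊆ ℝ^d be open with nonempty boundary and let x ∈ ∂Ω be an LCDD boundary point in standard position. Then the set of fluctuating directions at x, i.e. the set of v ∈ ℝ^d that are not non-fluctuating directions at x, has d-dimensional Lebesgue measure zero. -/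
open Set Topology Filter MeasureTheory

noncomputable section

/-- `v` is a non-fluctuating direction of `Ω` at `x`: whenever there is a sequence
`t m → 0+` with `x + t m • v ∉ Ω` for all `m`, there exists `tv > 0` with `x + s • v ∉ Ω` for
all `s ∈ (0, tv)`. -/
def nonFluctuating {E : Type*} [AddCommGroup E] [Module ℝ E] (Ω : Set E) (x v : E) : Prop :=
  (∃ t : ℕ → ℝ, (∀ m, 0 < t m) ∧ Tendsto t atTop (𝓝 0) ∧ ∀ m, x + t m • v ∉ Ω) →
  ∃ tv > (0 : ℝ), ∀ s ∈ Set.Ioo (0 : ℝ) tv, x + s • v ∉ Ω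

/-- at an LCDD boundary point `x` of an open set `Ω` in standard position, the set
of fluctuating directions at `x` is Lebesgue negligible. -/
theorem stmt_9 (n : ℕ) (hn : 1 ≤ n) (Ω : Set (EuclideanSpace ℝ (Fin n) × ℝ))
    (hΩ : IsOpen Ω) (hbd : (frontier Ω).Nonempty)
    (x : EuclideanSpace ℝ (Fin n) × ℝ) (hx : x ∈ frontier Ω)
    (δ : ℝ) (hδ : 0 < δ) (K : NNReal) (γ : EuclideanSpace ℝ (Fin n) → ℝ)
    (hγ : LipschitzWith K γ)
    (hcl : closure Ω ∩ Metric.ball x δ = epi γ ∩ Metric.ball x δ)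
    (hop : Ω ∩ Metric.ball x δ = epiStrict γ ∩ Metric.ball x δ)
    (g : EuclideanSpace ℝ (Fin n) → ℝ) (hgc : Continuous g)
    (hg : ∀ v' : EuclideanSpace ℝ (Fin n),
      Tendsto (fun t : ℝ => (γ (x.1 + t • v') - γ x.1) / t) (𝓝[>] 0) (𝓝 (g v'))) :
    volume {v : EuclideanSpace ℝ (Fin n) × ℝ | ¬ nonFluctuating Ω x v} = 0 := by
  have hxcl : x ∈ closure Ω := frontier_subset_closure hx
  have hxint : x ∉ interior Ω := fun h => hx.2 h
  have hxΩ : x ∉ Ω := fun h => hxint (by rwa [hΩ.interior_eq])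
  have hxball : x ∈ Metric.ball x δ := Metric.mem_ball_self hδ
  have hxepi : γ x.1 ≤ x.2 := by
    have : x ∈ epi γ ∩ Metric.ball x δ := hcl ▸ ⟨hxcl, hxball⟩
    exact this.1
  have hxnot : ¬ γ x.1 < x.2 := by
    intro h
    have : x ∈ Ω ∩ Metric.ball x δ := hop ▸ ⟨h, hxball⟩
    exact hxΩ this.1
  have hxe : x.2 = γ x.1 := le_antisymm (not_lt.1 hxnot) hxepi
  have hball : ∀ v : EuclideanSpace ℝ (Fin n) × ℝ,
      ∀ᶠ t in 𝓝[>] (0:ℝ), x + t • v ∈ Metric.ball x δ := by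
    intro v
    have hc : Tendsto (fun t : ℝ => x + t • v) (𝓝 0) (𝓝 x) := by
      have hcont : Continuous (fun t : ℝ => x + t • v) := by continuity
      simpa using hcont.tendsto 0
    exact (hc.mono_left nhdsWithin_le_nhds) (Metric.ball_mem_nhds x hδ)
  have key : ∀ v : EuclideanSpace ℝ (Fin n) × ℝ, v.2 ≠ g v.1 → nonFluctuating Ω x v := by
    intro v hv
    rcases lt_or_gt_of_ne hv with hlt | hgt
    · -- v.2 < g v.1 : x + s • v ∉ Ω for small s
      intro _
      have h1 : ∀ᶠ t in 𝓝[>] (0:ℝ),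
          (γ (x.1 + t • v.1) - γ x.1) / t ∈ Ioi v.2 := (hg v.1) (Ioi_mem_nhds hlt)
      obtain ⟨u, hu, hsub⟩ := mem_nhdsGT_iff_exists_Ioo_subset.1 ((hball v).and h1)
      refine ⟨u, hu, fun s hs hmem => ?_⟩
      obtain ⟨hb, hgt'⟩ := hsub hs
      have hsΩ : x + s • v ∈ epiStrict γ ∩ Metric.ball x δ := hop ▸ ⟨hmem, hb⟩
      have h2 : γ (x.1 + s • v.1) < x.2 + s * v.2 := by
        have := hsΩ.1
        simpa [epiStrict, Prod.smul_fst, Prod.smul_snd, smul_eq_mul] using this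
      have h3 : v.2 < (γ (x.1 + s • v.1) - γ x.1) / s := hgt'
      rw [lt_div_iff₀ hs.1] at h3
      rw [hxe] at h2
      nlinarith
    · -- v.2 > g v.1 : x + t • v ∈ Ω for small t, so hypothesis of implication fails
      rintro ⟨t, htpos, htto, htnot⟩
      have h1 : ∀ᶠ s in 𝓝[>] (0:ℝ),
          (γ (x.1 + s • v.1) - γ x.1) / s ∈ Iio v.2 := (hg v.1) (Iio_mem_nhds hgt)
      obtain ⟨u, hu, hsub⟩ := mem_nhdsGT_iff_exists_Ioo_subset.1 ((hball v).and h1)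
      have : ∀ᶠ m in atTop, t m < u := htto (Iio_mem_nhds hu)
      obtain ⟨m, hm⟩ := this.exists
      obtain ⟨hb, hlt'⟩ := hsub ⟨htpos m, hm⟩
      have hs := htpos m
      have h3 : (γ (x.1 + t m • v.1) - γ x.1) / t m < v.2 := hlt'
      rw [div_lt_iff₀ hs] at h3
      have h2 : x + t m • v ∈ epiStrict γ := by
        show γ ((x + t m • v).1) < (x + t m • v).2
        simp only [Prod.fst_add, Prod.snd_add, Prod.smul_fst, Prod.smul_snd, smul_eq_mul]
        rw [hxe]
        nlinarith
      have : x + t m • v ∈ Ω ∩ Metric.ball x δ := hop ▸ ⟨h2, hb⟩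
      exact absurd this.1 (htnot m)
  have hsub : {v : EuclideanSpace ℝ (Fin n) × ℝ | ¬ nonFluctuating Ω x v} ⊆
      {v : EuclideanSpace ℝ (Fin n) × ℝ | v.2 = g v.1} := by
    intro v hv
    by_contra h
    exact hv (key v h)
  refine measure_mono_null hsub ?_
  have hmeas : MeasurableSet {v : EuclideanSpace ℝ (Fin n) × ℝ | v.2 = g v.1} :=
    (isClosed_eq continuous_snd (hgc.comp continuous_fst)).measurableSet
  rw [MeasureTheory.Measure.volume_eq_prod, Measure.prod_apply hmeas]
  have : ∀ a : EuclideanSpace ℝ (Fin n),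
      (volume (Prod.mk a ⁻¹' {v : EuclideanSpace ℝ (Fin n) × ℝ | v.2 = g v.1}) : ENNReal) = 0 := by
    intro a
    have : Prod.mk a ⁻¹' {v : EuclideanSpace ℝ (Fin n) × ℝ | v.2 = g v.1} = {g a} := by
      ext b; simp [Set.mem_preimage]
    rw [this]
    exact measure_singleton _
  simp [this]
end
end

section
/- Let Ω ⊆ ℝ^d be open with nonempty boundary and let x ∈ ∂Ω be an LCDD boundary point in standard position. Then for Lebesgue-almost every z ∈ ℝ^d, the indicator 1_{Ω_{x,t}}(z) converges to 1_{F̃_x(Ω)}(z) as t → 0+, where Ω_{x,t} := (Ω − x)/t; moreover 1_{F̃_x(Ω)}(z) = 1_{T^B_x(closure(Ω))}(z) for Lebesgue-almost every z ∈ ℝ^d. -/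
open Set Topology Filter MeasureTheory

noncomputable section

/-!
Let `g = γ'(x'; ·)`. Near `x`, the point `x + t z` lies in `Ω` iff the difference quotient
`(γ (x' + t z') - γ x') / t` is `< z_d`, and this quotient tends to `g z'`. Hence every `z`
strictly above the graph of `g` satisfies `x + t z ∈ Ω` for all small `t > 0` (so `z` is feasible
and tangent), and every `z` strictly below it satisfies `x + t z ∉ Ω` for all small `t > 0` (so it
is not feasible). Such a `z` is not tangent either: since `γ` is Lipschitz, the difference
quotients converge uniformly in nearby directions, so a tangent direction `z` obeys
`g z' ≤ z_d`. The graph of the continuous function `g` is Lebesgue-null.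
-/

theorem ae_ne_graph {α : Type*} [MeasurableSpace α] (μ : Measure α) [SFinite μ] {g : α → ℝ}
    (hg : Measurable g) : ∀ᵐ z ∂μ.prod volume, z.2 ≠ g z.1 := by
  rw [ae_iff]
  simp only [ne_eq, not_not]
  rw [Measure.measure_prod_null (measurableSet_graph hg)]
  refine Eventually.of_forall fun a => ?_
  simp [show Prod.mk a ⁻¹' {z : α × ℝ | z.2 = g z.1} = {g a} by ext; simp]

section FeasibleCone

variable {E : Type*} [AddCommGroup E] [Module ℝ E] {Ω : Set E} {x v : E}

theorem mem_feasible_iff_eventually :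
    v ∈ feasible Ω x ↔ ∀ᶠ t in 𝓝[>] (0 : ℝ), x + t • v ∈ Ω := by
  rw [Filter.Eventually, mem_nhdsGT_iff_exists_Ioo_subset]
  rfl

theorem notMem_feasible_of_eventually (h : ∀ᶠ t in 𝓝[>] (0 : ℝ), x + t • v ∉ Ω) :
    v ∉ feasible Ω x := fun hv =>
  let ⟨_, hin, hout⟩ := ((mem_feasible_iff_eventually.1 hv).and h).exists
  hout hin

theorem tendsto_indicator_feasible
    (h : (∀ᶠ t in 𝓝[>] (0 : ℝ), x + t • v ∈ Ω) ∨ ∀ᶠ t in 𝓝[>] (0 : ℝ), x + t • v ∉ Ω) :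
    Tendsto (fun t : ℝ => indicator {w | x + t • w ∈ Ω} (fun _ => (1 : ℝ)) v) (𝓝[>] 0)
      (𝓝 (indicator (feasible Ω x) (fun _ => (1 : ℝ)) v)) := by
  rcases h with hin | hout
  · rw [indicator_of_mem (mem_feasible_iff_eventually.2 hin)]
    exact tendsto_const_nhds.congr'
      (hin.mono fun t ht => (indicator_of_mem (s := {w | x + t • w ∈ Ω}) ht _).symm)
  · rw [indicator_of_notMem (notMem_feasible_of_eventually hout)]
    exact tendsto_const_nhds.congr'
      (hout.mono fun t ht => (indicator_of_notMem (s := {w | x + t • w ∈ Ω}) ht _).symm)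

end FeasibleCone

section TangentCone

variable {E : Type*} [NormedAddCommGroup E] [NormedSpace ℝ E]

theorem bouligand_mono {A B : Set E} (h : A ⊆ B) (a : E) : bouligand A a ⊆ bouligand B a := by
  rintro v (hv | ⟨hv, u, huA, hu⟩)
  · exact Or.inl hv
  · exact Or.inr ⟨hv, u, fun m => h (huA m), hu⟩

theorem feasible_subset_bouligand (A : Set E) (a : E) : feasible A a ⊆ bouligand A a := by
  rintro v ⟨tv, htv, hA⟩
  rcases eq_or_ne v 0 with rfl | hv
  · exact Or.inl rfl
  obtain ⟨s, -, hs, hs0⟩ := exists_seq_strictAnti_tendsto' htv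
  refine Or.inr ⟨hv, fun m => a + s m • v, fun m => hA _ (hs m), fun m => ?_, ?_, ?_⟩
  · simpa using smul_ne_zero (hs m).1.ne' hv
  · simpa using tendsto_const_nhds.add (hs0.smul_const v)
  · refine tendsto_const_nhds.congr fun m => ?_
    rw [add_sub_cancel_left, norm_smul, Real.norm_of_nonneg (hs m).1.le, mul_inv, smul_smul,
      mul_right_comm, inv_mul_cancel₀ (hs m).1.ne', one_mul]

end TangentCone

section DifferenceQuotient

variable {E : Type*} [NormedAddCommGroup E] [NormedSpace ℝ E]

def diffQuot (γ : E → ℝ) (a v : E) (t : ℝ) : ℝ := (γ (a + t • v) - γ a) / t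

theorem diffQuot_smul (γ : E → ℝ) (a v : E) {c : ℝ} (hc : c ≠ 0) (t : ℝ) :
    diffQuot γ a (c • v) t = c * diffQuot γ a v (c * t) := by
  rcases eq_or_ne t 0 with rfl | ht
  · simp [diffQuot]
  · simp only [diffQuot, smul_smul, mul_comm t c]
    field_simp

theorem map_smul_of_tendsto_diffQuot {γ : E → ℝ} {a : E} {g : E → ℝ}
    (hg : ∀ v, Tendsto (diffQuot γ a v) (𝓝[>] 0) (𝓝 (g v))) {c : ℝ} (hc : 0 < c) (v : E) :
    g (c • v) = c * g v := by
  have hmul : Tendsto (c * ·) (𝓝[>] (0 : ℝ)) (𝓝[>] 0) := tendsto_nhdsWithin_iff.2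
    ⟨((continuous_const_mul c).tendsto' 0 0 (mul_zero c)).mono_left nhdsWithin_le_nhds,
      eventually_mem_nhdsWithin.mono fun _ ht => mul_pos hc ht⟩
  have hquot := hg (c • v)
  rw [show diffQuot γ a (c • v) = fun t => c * diffQuot γ a v (c * t) from
    funext (diffQuot_smul γ a v hc.ne')] at hquot
  exact tendsto_nhds_unique hquot (((hg v).comp hmul).const_mul c)

theorem map_zero_of_tendsto_diffQuot {γ : E → ℝ} {a : E} {g : E → ℝ}
    (hg : ∀ v, Tendsto (diffQuot γ a v) (𝓝[>] 0) (𝓝 (g v))) : g 0 = 0 := by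
  have h := map_smul_of_tendsto_diffQuot hg two_pos 0
  rw [smul_zero] at h
  linarith

theorem LipschitzWith.dist_diffQuot_le {γ : E → ℝ} {K : NNReal} (hγ : LipschitzWith K γ)
    (a v w : E) {t : ℝ} (ht : 0 < t) :
    dist (diffQuot γ a v t) (diffQuot γ a w t) ≤ K * dist v w := by
  have hlip := hγ.dist_le_mul (a + t • v) (a + t • w)
  rw [dist_add_left, dist_smul₀, Real.norm_of_nonneg ht.le] at hlip
  rw [diffQuot, diffQuot, Real.dist_eq, ← sub_div, sub_sub_sub_cancel_right, abs_div,
    abs_of_pos ht, div_le_iff₀ ht, ← Real.dist_eq]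
  linarith

theorem LipschitzWith.tendsto_diffQuot_comp {γ : E → ℝ} {K : NNReal} (hγ : LipschitzWith K γ)
    {a v : E} {L : ℝ} (hv : Tendsto (diffQuot γ a v) (𝓝[>] 0) (𝓝 L)) {ι : Type*} {l : Filter ι}
    {t : ι → ℝ} {w : ι → E} (ht : Tendsto t l (𝓝[>] 0)) (hw : Tendsto w l (𝓝 v)) :
    Tendsto (fun i => diffQuot γ a (w i) (t i)) l (𝓝 L) := by
  refine (hv.comp ht).congr_dist (squeeze_zero' (Eventually.of_forall fun _ => dist_nonneg)
    ?_ (by simpa using (tendsto_iff_dist_tendsto_zero.1 hw).const_mul (K : ℝ)))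
  filter_upwards [ht.eventually self_mem_nhdsWithin] with i hi
  rw [dist_comm (w i)]
  exact hγ.dist_diffQuot_le a v (w i) hi

end DifferenceQuotient

theorem apply_fst_eq_snd_of_mem_frontier {X : Type*} [PseudoMetricSpace X] {γ : X → ℝ}
    {x : X × ℝ} {Ω : Set (X × ℝ)} (hΩo : IsOpen Ω)
    (hxΩ : x ∈ frontier Ω) {δ : ℝ} (hδ : 0 < δ) (hΩ : ∀ y ∈ Metric.ball x δ, y ∈ Ω ↔ γ y.1 < y.2)
    (hcl : ∀ y ∈ Metric.ball x δ, y ∈ closure Ω → γ y.1 ≤ y.2) : γ x.1 = x.2 := by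
  rw [hΩo.frontier_eq] at hxΩ
  have hxball := Metric.mem_ball_self hδ (x := x)
  exact (hcl x hxball hxΩ.1).antisymm (not_lt.1 fun h => hxΩ.2 ((hΩ x hxball).2 h))

section Epigraph

variable {E : Type*} [NormedAddCommGroup E] [NormedSpace ℝ E] {γ : E → ℝ} {x z : E × ℝ}
  {Ω : Set (E × ℝ)} {δ : ℝ}

theorem diffQuot_lt_iff (hx : γ x.1 = x.2) {t : ℝ} (ht : 0 < t) :
    diffQuot γ x.1 z.1 t < z.2 ↔ γ (x + t • z).1 < (x + t • z).2 := by
  simp only [diffQuot, div_lt_iff₀ ht, Prod.fst_add, Prod.snd_add, Prod.smul_fst, Prod.smul_snd,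
    smul_eq_mul, hx]
  constructor <;> intro h <;> linarith

theorem diffQuot_le_iff (hx : γ x.1 = x.2) {t : ℝ} (ht : 0 < t) :
    diffQuot γ x.1 z.1 t ≤ z.2 ↔ γ (x + t • z).1 ≤ (x + t • z).2 := by
  simp only [diffQuot, div_le_iff₀ ht, Prod.fst_add, Prod.snd_add, Prod.smul_fst, Prod.smul_snd,
    smul_eq_mul, hx]
  constructor <;> intro h <;> linarith

theorem eventually_mem_iff_diffQuot_lt (hδ : 0 < δ)
    (hΩ : ∀ y ∈ Metric.ball x δ, y ∈ Ω ↔ γ y.1 < y.2) (hx : γ x.1 = x.2) (z : E × ℝ) :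
    ∀ᶠ t in 𝓝[>] (0 : ℝ), x + t • z ∈ Ω ↔ diffQuot γ x.1 z.1 t < z.2 := by
  have hcont : Tendsto (fun t : ℝ => x + t • z) (𝓝[>] 0) (𝓝 x) := by
    refine (Continuous.tendsto' ?_ 0 x (by simp)).mono_left nhdsWithin_le_nhds
    fun_prop
  filter_upwards [hcont.eventually_mem (Metric.ball_mem_nhds x hδ), self_mem_nhdsWithin]
    with t hball ht
  rw [hΩ _ hball, diffQuot_lt_iff hx ht]

theorem eventually_mem_of_lt (hδ : 0 < δ)
    (hΩ : ∀ y ∈ Metric.ball x δ, y ∈ Ω ↔ γ y.1 < y.2) (hx : γ x.1 = x.2) {L : ℝ}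
    (hL : Tendsto (diffQuot γ x.1 z.1) (𝓝[>] 0) (𝓝 L)) (hz : L < z.2) :
    ∀ᶠ t in 𝓝[>] (0 : ℝ), x + t • z ∈ Ω := by
  filter_upwards [eventually_mem_iff_diffQuot_lt hδ hΩ hx z, hL.eventually_lt_const hz]
    with t hiff ht using hiff.2 ht

theorem eventually_notMem_of_gt (hδ : 0 < δ)
    (hΩ : ∀ y ∈ Metric.ball x δ, y ∈ Ω ↔ γ y.1 < y.2) (hx : γ x.1 = x.2) {L : ℝ}
    (hL : Tendsto (diffQuot γ x.1 z.1) (𝓝[>] 0) (𝓝 L)) (hz : z.2 < L) :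
    ∀ᶠ t in 𝓝[>] (0 : ℝ), x + t • z ∉ Ω := by
  filter_upwards [eventually_mem_iff_diffQuot_lt hδ hΩ hx z, hL.eventually_const_lt hz]
    with t hiff ht using fun h => (hiff.1 h).not_gt ht

theorem le_of_mem_bouligand {A : Set (E × ℝ)} (hδ : 0 < δ)
    (hA : ∀ y ∈ Metric.ball x δ, y ∈ A → γ y.1 ≤ y.2) (hx : γ x.1 = x.2) {K : NNReal}
    (hγ : LipschitzWith K γ) {g : E → ℝ}
    (hg : ∀ v, Tendsto (diffQuot γ x.1 v) (𝓝[>] 0) (𝓝 (g v))) (hz : z ∈ bouligand A x) :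
    g z.1 ≤ z.2 := by
  rcases hz with rfl | ⟨hz0, u, huA, hux, hlim, hdir⟩
  · simp [map_zero_of_tendsto_diffQuot hg]
  set r : ℕ → ℝ := fun m => ‖u m - x‖
  set w : ℕ → E × ℝ := fun m => (r m)⁻¹ • (u m - x)
  have hr : ∀ m, 0 < r m := fun m => norm_pos_iff.2 (sub_ne_zero.2 (hux m))
  have hu : ∀ m, u m = x + r m • w m := fun m => by
    simp only [w, smul_smul, mul_inv_cancel₀ (hr m).ne', one_smul, add_sub_cancel]
  have hr0 : Tendsto r atTop (𝓝[>] 0) :=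
    tendsto_nhdsWithin_iff.2 ⟨by simpa using (hlim.sub_const x).norm, .of_forall hr⟩
  have hquot : ∀ᶠ m in atTop, diffQuot γ x.1 (w m).1 (r m) ≤ (w m).2 := by
    filter_upwards [hlim.eventually_mem (Metric.ball_mem_nhds x hδ)] with m hm
    rw [diffQuot_le_iff hx (hr m), ← hu m]
    exact hA _ hm (huA m)
  have hnorm : 0 < ‖z‖⁻¹ := inv_pos.2 (norm_pos_iff.2 hz0)
  have hlim' : g (‖z‖⁻¹ • z).1 ≤ (‖z‖⁻¹ • z).2 :=
    le_of_tendsto_of_tendsto (hγ.tendsto_diffQuot_comp (hg _) hr0 hdir.fst_nhds) hdir.snd_nhds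
      hquot
  rw [Prod.smul_fst, Prod.smul_snd, map_smul_of_tendsto_diffQuot hg hnorm, smul_eq_mul] at hlim'
  exact le_of_mul_le_mul_left hlim' hnorm

end Epigraph

theorem stmt_10_general (n : ℕ) (Ω : Set (EuclideanSpace ℝ (Fin n) × ℝ))
    (hΩ : IsOpen Ω)
    (x : EuclideanSpace ℝ (Fin n) × ℝ) (hx : x ∈ frontier Ω)
    (δ : ℝ) (hδ : 0 < δ) (K : NNReal) (γ : EuclideanSpace ℝ (Fin n) → ℝ)
    (hγ : LipschitzWith K γ)
    (hcl : closure Ω ∩ Metric.ball x δ = epi γ ∩ Metric.ball x δ)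
    (hop : Ω ∩ Metric.ball x δ = epiStrict γ ∩ Metric.ball x δ)
    (g : EuclideanSpace ℝ (Fin n) → ℝ) (hgc : Continuous g)
    (hg : ∀ v' : EuclideanSpace ℝ (Fin n),
      Tendsto (fun t : ℝ => (γ (x.1 + t • v') - γ x.1) / t) (𝓝[>] 0) (𝓝 (g v'))) :
    (∀ᵐ z ∂(volume : Measure (EuclideanSpace ℝ (Fin n) × ℝ)),
      Tendsto (fun t : ℝ => Set.indicator {w : EuclideanSpace ℝ (Fin n) × ℝ | x + t • w ∈ Ω}
          (fun _ => (1 : ℝ)) z)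
        (𝓝[>] 0) (𝓝 (Set.indicator (feasible Ω x) (fun _ => (1 : ℝ)) z))) ∧
    (∀ᵐ z ∂(volume : Measure (EuclideanSpace ℝ (Fin n) × ℝ)),
      Set.indicator (feasible Ω x) (fun _ => (1 : ℝ)) z
        = Set.indicator (bouligand (closure Ω) x) (fun _ => (1 : ℝ)) z) := by
  have hg' : ∀ v, Tendsto (diffQuot γ x.1 v) (𝓝[>] 0) (𝓝 (g v)) := hg
  have hΩloc : ∀ y ∈ Metric.ball x δ, y ∈ Ω ↔ γ y.1 < y.2 := fun y hy => by
    simpa [hy, epiStrict] using Set.ext_iff.1 hop y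
  have hclloc : ∀ y ∈ Metric.ball x δ, y ∈ closure Ω → γ y.1 ≤ y.2 := fun y hy hyΩ =>
    ((Set.ext_iff.1 hcl y).1 ⟨hyΩ, hy⟩).1
  have hγx := apply_fst_eq_snd_of_mem_frontier hΩ hx hδ hΩloc hclloc
  have hae : ∀ᵐ z ∂(volume : Measure (EuclideanSpace ℝ (Fin n) × ℝ)), z.2 ≠ g z.1 := by
    rw [Measure.volume_eq_prod]
    exact ae_ne_graph volume hgc.measurable
  have habove : ∀ z : EuclideanSpace ℝ (Fin n) × ℝ, g z.1 < z.2 →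
      ∀ᶠ t in 𝓝[>] (0 : ℝ), x + t • z ∈ Ω := fun z =>
    eventually_mem_of_lt hδ hΩloc hγx (hg' z.1)
  have hbelow : ∀ z : EuclideanSpace ℝ (Fin n) × ℝ, z.2 < g z.1 →
      ∀ᶠ t in 𝓝[>] (0 : ℝ), x + t • z ∉ Ω := fun z =>
    eventually_notMem_of_gt hδ hΩloc hγx (hg' z.1)
  refine ⟨hae.mono fun z hz => ?_, hae.mono fun z hz => ?_⟩
  · rcases hz.lt_or_gt with hlt | hgt
    exacts [tendsto_indicator_feasible (.inr (hbelow z hlt)),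
      tendsto_indicator_feasible (.inl (habove z hgt))]
  · rcases hz.lt_or_gt with hlt | hgt
    · rw [indicator_of_notMem (notMem_feasible_of_eventually (hbelow z hlt)),
        indicator_of_notMem fun hb => hlt.not_ge (le_of_mem_bouligand hδ hclloc hγx hγ hg' hb)]
    · have hfeas := mem_feasible_iff_eventually.2 (habove z hgt)
      rw [indicator_of_mem hfeas,
        indicator_of_mem (bouligand_mono subset_closure x (feasible_subset_bouligand Ω x hfeas))]

/-- at an LCDD boundary point `x` of an open set `Ω` in standard position, for
Lebesgue-a.e. `z` the indicator of the rescaled set `Ω_{x,t} = {w | x + t • w ∈ Ω}` at `z`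
converges to the indicator of the open feasible direction cone as `t → 0+`, and for a.e. `z`
the indicators of the feasible cone and of the Bouligand tangent cone of `closure Ω` agree. -/
theorem stmt_10 (n : ℕ) (hn : 1 ≤ n) (Ω : Set (EuclideanSpace ℝ (Fin n) × ℝ))
    (hΩ : IsOpen Ω) (hbd : (frontier Ω).Nonempty)
    (x : EuclideanSpace ℝ (Fin n) × ℝ) (hx : x ∈ frontier Ω)
    (δ : ℝ) (hδ : 0 < δ) (K : NNReal) (γ : EuclideanSpace ℝ (Fin n) → ℝ)
    (hγ : LipschitzWith K γ)
    (hcl : closure Ω ∩ Metric.ball x δ = epi γ ∩ Metric.ball x δ)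
    (hop : Ω ∩ Metric.ball x δ = epiStrict γ ∩ Metric.ball x δ)
    (g : EuclideanSpace ℝ (Fin n) → ℝ) (hgc : Continuous g)
    (hg : ∀ v' : EuclideanSpace ℝ (Fin n),
      Tendsto (fun t : ℝ => (γ (x.1 + t • v') - γ x.1) / t) (𝓝[>] 0) (𝓝 (g v'))) :
    (∀ᵐ z ∂(volume : Measure (EuclideanSpace ℝ (Fin n) × ℝ)),
      Tendsto (fun t : ℝ => Set.indicator {w : EuclideanSpace ℝ (Fin n) × ℝ | x + t • w ∈ Ω}
          (fun _ => (1 : ℝ)) z)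
        (𝓝[>] 0) (𝓝 (Set.indicator (feasible Ω x) (fun _ => (1 : ℝ)) z))) ∧
    (∀ᵐ z ∂(volume : Measure (EuclideanSpace ℝ (Fin n) × ℝ)),
      Set.indicator (feasible Ω x) (fun _ => (1 : ℝ)) z
        = Set.indicator (bouligand (closure Ω) x) (fun _ => (1 : ℝ)) z) :=
  stmt_10_general n Ω hΩ x hx δ hδ K γ hγ hcl hop g hgc hg
end
end

section
/- Let Ω ⊆ ℝ^d be open with nonempty boundary and x ∈ ∂Ω. If there exists δ > 0 such that Ω ∩ B(x,δ) is convex, or there exists δ > 0 such that (ℝ^d ∖ Ω) ∩ B(x,δ) is convex, then every v ∈ ℝ^d is a non-fluctuating direction at x. -/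
open Set Topology Filter

noncomputable section

/-- if `Ω ⊆ ℝ^d` is open with nonempty boundary, `x ∈ ∂Ω`, and either
`Ω ∩ B(x, δ)` is convex for some `δ > 0` or `(ℝ^d \ Ω) ∩ B(x, δ)` is convex for some `δ > 0`,
then every direction is non-fluctuating at `x`. -/
theorem stmt_11 (d : ℕ) (Ω : Set (EuclideanSpace ℝ (Fin d)))
    (hΩ : IsOpen Ω) (hbd : (frontier Ω).Nonempty)
    (x : EuclideanSpace ℝ (Fin d)) (hx : x ∈ frontier Ω)
    (hconv : (∃ δ > (0 : ℝ), Convex ℝ (Ω ∩ Metric.ball x δ)) ∨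
      (∃ δ > (0 : ℝ), Convex ℝ (Ωᶜ ∩ Metric.ball x δ))) :
    ∀ v : EuclideanSpace ℝ (Fin d), nonFluctuating Ω x v := by
  intro v
  rintro ⟨t, htpos, htlim, htout⟩
  have hfr := hx
  rw [hΩ.frontier_eq] at hfr
  have hxΩ : x ∉ Ω := hfr.2
  have hxcl : x ∈ closure Ω := hfr.1
  rcases hconv with ⟨δ, hδ, hc⟩ | ⟨δ, hδ, hc⟩
  · -- Ω ∩ ball convex
    have hvpos : (0:ℝ) < ‖v‖ + 1 := by positivity
    refine ⟨δ / (‖v‖ + 1), by positivity, ?_⟩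
    intro s hs hmem
    have hball : x + s • v ∈ Metric.ball x δ := by
      rw [Metric.mem_ball, dist_eq_norm]
      have h1 : x + s • v - x = s • v := by abel
      rw [h1, norm_smul, Real.norm_of_nonneg hs.1.le]
      have h2 : s * (‖v‖ + 1) < δ := (lt_div_iff₀ hvpos).mp hs.2
      nlinarith [hs.1]
    obtain ⟨n, hn⟩ : ∃ n, t n < s := (htlim.eventually (gt_mem_nhds hs.1)).exists
    have hint : x + s • v ∈ interior (Ω ∩ Metric.ball x δ) := by
      rw [(hΩ.inter Metric.isOpen_ball).interior_eq]
      exact ⟨hmem, hball⟩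
    have hclx : x ∈ closure (Ω ∩ Metric.ball x δ) := by
      rw [mem_closure_iff] at hxcl ⊢
      intro o ho hxo
      obtain ⟨y, hy⟩ := hxcl (o ∩ Metric.ball x δ) (ho.inter Metric.isOpen_ball)
        ⟨hxo, Metric.mem_ball_self hδ⟩
      exact ⟨y, hy.1.1, hy.2, hy.1.2⟩
    set a := t n / s with ha_def
    have ha : 0 < a := div_pos (htpos n) hs.1
    have hb : (0:ℝ) ≤ 1 - a := by
      have : a < 1 := (div_lt_one hs.1).mpr hn
      linarith
    have hcombo := hc.combo_interior_closure_mem_interior hint hclx ha hb (by ring)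
    have heq : a • (x + s • v) + (1 - a) • x = x + t n • v := by
      have has : a * s = t n := div_mul_cancel₀ _ (ne_of_gt hs.1)
      rw [smul_add, smul_smul, has]
      module
    rw [heq] at hcombo
    exact htout n (interior_subset hcombo).1
  · -- Ωᶜ ∩ ball convex
    have hvpos : (0:ℝ) < ‖v‖ + 1 := by positivity
    obtain ⟨n, hn⟩ : ∃ n, t n < δ / (‖v‖ + 1) :=
      (htlim.eventually (gt_mem_nhds (by positivity))).exists
    refine ⟨t n, htpos n, ?_⟩
    intro s hs hmem
    have hballn : x + t n • v ∈ Metric.ball x δ := by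
      rw [Metric.mem_ball, dist_eq_norm]
      have h1 : x + t n • v - x = t n • v := by abel
      rw [h1, norm_smul, Real.norm_of_nonneg (htpos n).le]
      have h2 : t n * (‖v‖ + 1) < δ := (lt_div_iff₀ hvpos).mp hn
      nlinarith [htpos n]
    set a := s / t n with ha_def
    have ha : 0 < a := div_pos hs.1 (htpos n)
    have hb : (0:ℝ) ≤ 1 - a := by
      have : a < 1 := (div_lt_one (htpos n)).mpr hs.2
      linarith
    have hcombo := hc ⟨htout n, hballn⟩ ⟨hxΩ, Metric.mem_ball_self hδ⟩ ha.le hb (by ring)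
    have heq : a • (x + t n • v) + (1 - a) • x = x + s • v := by
      have has : a * t n = s := div_mul_cancel₀ _ (ne_of_gt (htpos n))
      rw [smul_add, smul_smul, has]
      module
    rw [heq] at hcombo
    exact hcombo.1 hmem
end
end
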